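/- arXiv:2406.16973 — 10 statements merged into one kernel-verified Lean document; each statement's English description precedes it below -/
import Mathlib

section
/- Let A be an n×n circulant matrix over a finite field F. Then A is semi-involutory if and only if there exist non-singular diagonal matrices D₁ and D₂ over F such that D₁ⁿ = k₁·I and D₂ⁿ = k₂·I for some non-zero scalars k₁, k₂ ∈ F, and A⁻¹ = D₁·A·D₂. -/
open Matrix

/-- The `n × n` circulant matrix with first row `c₀, c₁, …, c_{n-1}`, i.e. the matrix whose
`(i,j)` entry is `c_{(j - i) mod n}`. -/
def circulantM {n : ℕ} {F : Type*} (c : Fin n → F) : Matrix (Fin n) (Fin n) F :=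
  Matrix.of fun i j => c (j - i)

/-!
Write `D₁ = diag d`, `D₂ = diag e`. The inverse of a circulant matrix is circulant, so
`A⁻¹ = D₁ A D₂` forces `d i * e (i + r)` to be independent of `i` whenever `c r ≠ 0`. Comparing two
such `r` shows that `d (i + s) / d i` is independent of `i` for every `s` in a subgroup `T` of
`ℤ/n` containing all differences of the support of `c`, and since `n • s = 0` these ratios are
`n`-th roots of unity. Dividing `d` on each coset of `T` by its value at a fixed representative,
and multiplying `e` accordingly, leaves `D₁ A D₂` unchanged and makes `D₁ⁿ = 1` and `D₂ⁿ` scalar.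
-/

section QuasiPeriods

variable {G M : Type*} [AddCommGroup G] [CommGroup M]

def quasiPeriods (d : G → M) : AddSubgroup G where
  carrier := {s | ∃ μ, ∀ i, d (i + s) = μ * d i}
  zero_mem' := ⟨1, by simp⟩
  add_mem' := by
    rintro s t ⟨μ, hμ⟩ ⟨ν, hν⟩
    exact ⟨ν * μ, fun i => by rw [← add_assoc, hν, hμ, mul_assoc]⟩
  neg_mem' := by
    rintro s ⟨μ, hμ⟩
    exact ⟨μ⁻¹, fun i => by rw [eq_inv_mul_iff_mul_eq, ← hμ, neg_add_cancel_right]⟩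

theorem div_pow_eq_one_of_mem_quasiPeriods {d : G → M} {s : G} {m : ℕ}
    (hs : s ∈ quasiPeriods d) (hm : m • s = 0) (i : G) : (d (i + s) / d i) ^ m = 1 := by
  obtain ⟨μ, hμ⟩ := hs
  have hpow : ∀ k : ℕ, d (i + k • s) = μ ^ k * d i := by
    intro k
    induction k with
    | zero => simp
    | succ k ih => rw [succ_nsmul, ← add_assoc, hμ, ih, pow_succ', mul_assoc]
  have := hpow m
  rw [hm, add_zero, right_eq_mul] at this
  rwa [hμ, mul_div_cancel_right]

theorem exists_pow_eq_const_of_mul_apply_add_eq {m : ℕ} (hm : ∀ s : G, m • s = 0)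
    {S : Set G} {d e : G → M} (h : ∀ r ∈ S, ∀ i, d i * e (i + r) = d 0 * e r) :
    ∃ (d' e' : G → M) (k₁ k₂ : M), (∀ i, d' i ^ m = k₁) ∧ (∀ j, e' j ^ m = k₂) ∧
      ∀ r ∈ S, ∀ i, d' i * e' (i + r) = d i * e (i + r) := by
  rcases S.eq_empty_or_nonempty with rfl | ⟨r₀, hr₀⟩
  · exact ⟨1, 1, 1, 1, by simp, by simp, by simp⟩
  set T := quasiPeriods d
  have hST : ∀ r ∈ S, r - r₀ ∈ T := by
    intro r hr
    refine ⟨d 0 * e r₀ / (d 0 * e r), fun i => ?_⟩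
    have h₁ : d (i + (r - r₀)) = d 0 * e r₀ / e (i + r) := by
      refine eq_div_of_mul_eq' ?_
      simpa [add_assoc] using h r₀ hr₀ (i + (r - r₀))
    rw [h₁, ← h r hr i, mul_comm (d i), ← div_div, div_mul_cancel]
  set rep : G → G := fun i => (i : G ⧸ T).out
  have hrep_sub : ∀ i, i - rep i ∈ T := fun i =>
    QuotientAddGroup.eq_iff_sub_mem.mp (QuotientAddGroup.out_eq' _).symm
  have hrep_add : ∀ i, ∀ s ∈ T, rep (i + s) = rep i := fun i s hs => by
    simp only [rep, QuotientAddGroup.eq_iff_sub_mem.mpr (by simpa using hs : i + s - i ∈ T)]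
  have hd' : ∀ i, (d i / d (rep i)) ^ m = 1 := fun i => by
    simpa using div_pow_eq_one_of_mem_quasiPeriods (hrep_sub i) (hm _) (rep i)
  refine ⟨fun i => d i / d (rep i), fun j => e j * d (rep (j - r₀)), 1, (d 0 * e r₀) ^ m,
    hd', fun j => ?_, fun r hr i => ?_⟩
  · have he : e j = d 0 * e r₀ / d (j - r₀) := by
      rw [eq_div_iff_mul_eq', mul_comm]
      simpa using h r₀ hr₀ (j - r₀)
    dsimp only
    rw [he, div_mul_eq_mul_div, ← div_div_eq_mul_div, div_pow, hd', div_one]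
  · dsimp only
    rw [add_sub_assoc, hrep_add i _ (hST r hr)]
    simp

end QuasiPeriods

theorem Matrix.IsDiag.exists_eq_diagonal_units {ι F : Type*} [Fintype ι] [DecidableEq ι] [Field F]
    {D : Matrix ι ι F} (hD : D.IsDiag) (hdet : D.det ≠ 0) :
    ∃ d : ι → Fˣ, D = diagonal fun i => (d i : F) := by
  rw [← hD.diagonal_diag, det_diagonal, Finset.prod_ne_zero_iff] at hdet
  exact ⟨fun i => Units.mk0 _ (hdet i (Finset.mem_univ i)), hD.diagonal_diag.symm⟩

theorem Matrix.det_diagonal_units_ne_zero {ι F : Type*} [Fintype ι] [DecidableEq ι] [Field F]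
    (d : ι → Fˣ) : (diagonal fun i => (d i : F)).det ≠ 0 := by
  simp [det_diagonal, Finset.prod_ne_zero_iff]

theorem Matrix.diagonal_units_pow_eq_smul_one {ι F : Type*} [Fintype ι] [DecidableEq ι] [Field F]
    {d : ι → Fˣ} {m : ℕ} {k : Fˣ} (h : ∀ i, d i ^ m = k) :
    (diagonal fun i => (d i : F)) ^ m = (k : F) • 1 := by
  rw [diagonal_pow, smul_one_eq_diagonal]
  congr 1
  funext i
  simp [← h i]

theorem diagonal_mul_circulantM_mul_diagonal_apply {n : ℕ} {R : Type*} [CommRing R]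
    (d c e : Fin n → R) (i j : Fin n) :
    (diagonal d * circulantM c * diagonal e) i j = d i * c (j - i) * e j := by
  simp [circulantM]

section Circulant

variable {n : ℕ} [NeZero n]

theorem circulantM_inv {R : Type*} [CommRing R] (c : Fin n → R) :
    (circulantM c)⁻¹ = circulantM fun r => (circulantM c)⁻¹ 0 r := by
  ext i j
  have hshift : (circulantM c).submatrix (Equiv.addRight i) (Equiv.addRight i) = circulantM c := by
    ext a b
    simp [circulantM]
  have h := inv_submatrix_equiv (circulantM c) (Equiv.addRight i) (Equiv.addRight i)
  rw [hshift] at h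
  calc (circulantM c)⁻¹ i j
      = (circulantM c)⁻¹.submatrix (Equiv.addRight i) (Equiv.addRight i) 0 (j - i) := by simp
    _ = circulantM (fun r => (circulantM c)⁻¹ 0 r) i j := by rw [← h]; rfl

theorem exists_diagonal_pow_eq_const_of_circulantM_eq {F : Type*} [Field F] {b c : Fin n → F}
    {d e : Fin n → Fˣ} (h : circulantM b =
      diagonal (fun i => (d i : F)) * circulantM c * diagonal fun j => (e j : F)) :
    ∃ (d' e' : Fin n → Fˣ) (k₁ k₂ : Fˣ), (∀ i, d' i ^ n = k₁) ∧ (∀ j, e' j ^ n = k₂) ∧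
      circulantM b =
        diagonal (fun i => (d' i : F)) * circulantM c * diagonal fun j => (e' j : F) := by
  have hb : ∀ i j, b (j - i) = d i * c (j - i) * e j := fun i j => by
    have hij := congrFun₂ h i j
    rwa [diagonal_mul_circulantM_mul_diagonal_apply] at hij
  have hS : ∀ r ∈ {r | c r ≠ 0}, ∀ i, d i * e (i + r) = d 0 * e r := by
    intro r hr i
    ext
    apply mul_right_cancel₀ hr
    have hi := hb i (i + r)
    have h₀ := hb 0 r
    simp only [add_sub_cancel_left, sub_zero] at hi h₀
    push_cast
    linear_combination h₀ - hi
  have hn : ∀ s : Fin n, n • s = 0 := fun s => by simpa using card_nsmul_eq_zero (x := s)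
  obtain ⟨d', e', k₁, k₂, hd', he', hd'e'⟩ := exists_pow_eq_const_of_mul_apply_add_eq hn hS
  refine ⟨d', e', k₁, k₂, hd', he', ?_⟩
  ext i j
  rw [h, diagonal_mul_circulantM_mul_diagonal_apply, diagonal_mul_circulantM_mul_diagonal_apply]
  by_cases hc : c (j - i) = 0
  · simp [hc]
  · have := congrArg Units.val (hd'e' _ hc i)
    push_cast at this
    rw [add_sub_cancel] at this
    linear_combination -c (j - i) * this

end Circulant

theorem circulant_semiInvolutory_iff_general {n : ℕ} {F : Type*} [Field F]
    (c : Fin n → F) (A : Matrix (Fin n) (Fin n) F) (hA : A = circulantM c) :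
    (A.det ≠ 0 ∧ ∃ D₁ D₂ : Matrix (Fin n) (Fin n) F,
        D₁.IsDiag ∧ D₂.IsDiag ∧ D₁.det ≠ 0 ∧ D₂.det ≠ 0 ∧ A⁻¹ = D₁ * A * D₂) ↔
    (A.det ≠ 0 ∧ ∃ (D₁ D₂ : Matrix (Fin n) (Fin n) F) (k₁ k₂ : F),
        D₁.IsDiag ∧ D₂.IsDiag ∧ D₁.det ≠ 0 ∧ D₂.det ≠ 0 ∧ k₁ ≠ 0 ∧ k₂ ≠ 0 ∧
        D₁ ^ n = k₁ • (1 : Matrix (Fin n) (Fin n) F) ∧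
        D₂ ^ n = k₂ • (1 : Matrix (Fin n) (Fin n) F) ∧
        A⁻¹ = D₁ * A * D₂) := by
  refine ⟨?_, fun ⟨hdet, D₁, D₂, _, _, h₁, h₂, hD₁, hD₂, _, _, _, _, hinv⟩ =>
    ⟨hdet, D₁, D₂, h₁, h₂, hD₁, hD₂, hinv⟩⟩
  rintro ⟨hdet, D₁, D₂, h₁, h₂, hD₁, hD₂, hinv⟩
  refine ⟨hdet, ?_⟩
  obtain rfl | hn := eq_or_ne n 0
  · exact ⟨1, 1, 1, 1, isDiag_one, isDiag_one, by simp, by simp, one_ne_zero, one_ne_zero,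
      by simp, by simp, Subsingleton.elim _ _⟩
  have : NeZero n := ⟨hn⟩
  obtain ⟨d, rfl⟩ := h₁.exists_eq_diagonal_units hD₁
  obtain ⟨e, rfl⟩ := h₂.exists_eq_diagonal_units hD₂
  subst hA
  rw [circulantM_inv] at hinv ⊢
  obtain ⟨d', e', k₁, k₂, hd', he', h⟩ := exists_diagonal_pow_eq_const_of_circulantM_eq hinv
  exact ⟨_, _, k₁, k₂, isDiag_diagonal _, isDiag_diagonal _, det_diagonal_units_ne_zero d',
    det_diagonal_units_ne_zero e', k₁.ne_zero, k₂.ne_zero, diagonal_units_pow_eq_smul_one hd',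
    diagonal_units_pow_eq_smul_one he', h⟩

/-- Let `A` be an `n × n` circulant matrix over a finite field `F`. Then `A` is
semi-involutory (i.e. `A` is non-singular and there exist non-singular diagonal matrices
`D₁, D₂` with `A⁻¹ = D₁ * A * D₂`) if and only if there exist non-singular diagonal matrices
`D₁, D₂` such that `D₁ ^ n = k₁ • I` and `D₂ ^ n = k₂ • I` for some non-zero scalars
`k₁, k₂ ∈ F`, and `A⁻¹ = D₁ * A * D₂`. -/
theorem circulant_semiInvolutory_iff {n : ℕ} {F : Type*} [Field F] [Fintype F]
    (c : Fin n → F) (A : Matrix (Fin n) (Fin n) F) (hA : A = circulantM c) :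
    (A.det ≠ 0 ∧ ∃ D₁ D₂ : Matrix (Fin n) (Fin n) F,
        D₁.IsDiag ∧ D₂.IsDiag ∧ D₁.det ≠ 0 ∧ D₂.det ≠ 0 ∧ A⁻¹ = D₁ * A * D₂) ↔
    (A.det ≠ 0 ∧ ∃ (D₁ D₂ : Matrix (Fin n) (Fin n) F) (k₁ k₂ : F),
        D₁.IsDiag ∧ D₂.IsDiag ∧ D₁.det ≠ 0 ∧ D₂.det ≠ 0 ∧ k₁ ≠ 0 ∧ k₂ ≠ 0 ∧
        D₁ ^ n = k₁ • (1 : Matrix (Fin n) (Fin n) F) ∧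
        D₂ ^ n = k₂ • (1 : Matrix (Fin n) (Fin n) F) ∧
        A⁻¹ = D₁ * A * D₂) :=
  circulant_semiInvolutory_iff_general c A hA
end

section
/- Let A be an n×n circulant matrix over a finite field F. Then A is semi-orthogonal if and only if there exist non-singular diagonal matrices D₁ and D₂ over F such that D₁ⁿ = k₁·I and D₂ⁿ = k₂·I for some non-zero scalars k₁, k₂ ∈ F, and (A⁻¹)ᵀ = D₁·A·D₂. -/
open Matrix

/-!
Write `B = (A⁻¹)ᵀ = diag(d₁) A diag(d₂)`. Both `A` and `B` are invariant under the simultaneous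
shift `(i, j) ↦ (i + k, j + k)`, so comparing `B` at `(i, j)` and at `(i + k, j + k)` gives
`d₁ (i + k) d₂ (j + k) = d₁ i d₂ j` whenever `A i j ≠ 0`. If `A i j` and `A i' j` are both
non-zero, it follows that `d₁ (y + (i' - i)) = (d₁ i' / d₁ i) d₁ y` for all `y`, and going once
around the group shows `d₁ i ^ n = d₁ i' ^ n`. Hence `d₁ i ^ n` only depends on the column `j`,
and dividing `d₁ i` by an `n`-th root of it (while multiplying `d₂ j` by the same root) yields
diagonals with `d₁ ^ n = 1` and `d₂ ^ n` constant.
-/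

theorem pow_natCard_eq_one_of_forall_add_eq_mul {G M : Type*} [AddGroup G] [MonoidWithZero M]
    [IsCancelMulZero M] {f : G → M} {u : G} {q : M} (h : ∀ y, f (y + u) = q * f y)
    {x : G} (hx : f x ≠ 0) : q ^ Nat.card G = 1 := by
  have hpow : ∀ m : ℕ, f (x + m • u) = q ^ m * f x := by
    intro m
    induction m with
    | zero => simp
    | succ m ih => rw [succ_nsmul, ← add_assoc, h, ih, pow_succ', mul_assoc]
  have := hpow (Nat.card G)
  rw [card_nsmul_eq_zero', add_zero] at this
  exact (mul_eq_right₀ hx).mp this.symm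

namespace Matrix

theorem diagonal_mul_mul_diagonal_eq_of_mul_eq_one {m l α : Type*} [Fintype m] [Fintype l]
    [DecidableEq m] [DecidableEq l] [CommRing α] (A : Matrix m l α) (d₁ a : m → α)
    (d₂ b : l → α) (h : ∀ i j, A i j ≠ 0 → a i * b j = 1) :
    diagonal (d₁ * a) * A * diagonal (d₂ * b) = diagonal d₁ * A * diagonal d₂ := by
  ext i j
  simp only [mul_diagonal, diagonal_mul, Pi.mul_apply]
  by_cases hij : A i j = 0
  · simp [hij]
  · linear_combination d₁ i * A i j * d₂ j * h i j hij

theorem isDiag_and_det_ne_zero_iff {m K : Type*} [Fintype m] [DecidableEq m] [CommRing K]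
    [IsDomain K] {D : Matrix m m K} :
    D.IsDiag ∧ D.det ≠ 0 ↔ ∃ d : m → K, (∀ i, d i ≠ 0) ∧ D = diagonal d := by
  constructor
  · rintro ⟨hD, hdet⟩
    rw [← hD.diagonal_diag, det_diagonal, Finset.prod_ne_zero_iff] at hdet
    exact ⟨D.diag, fun i => hdet i (Finset.mem_univ i), hD.diagonal_diag.symm⟩
  · rintro ⟨d, hd, rfl⟩
    rw [det_diagonal, Finset.prod_ne_zero_iff]
    exact ⟨isDiag_diagonal d, fun i _ => hd i⟩

variable {G : Type*} [AddCommGroup G]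

def IsCirculant {α : Type*} (A : Matrix G G α) : Prop :=
  ∀ i j k, A (i + k) (j + k) = A i j

theorem IsCirculant.transpose {α : Type*} {A : Matrix G G α} (hA : A.IsCirculant) :
    Aᵀ.IsCirculant :=
  fun i j k => hA j i k

theorem IsCirculant.inv [Fintype G] [DecidableEq G] {K : Type*} [CommRing K] {A : Matrix G G K}
    (hA : A.IsCirculant) : A⁻¹.IsCirculant := by
  intro i j k
  have hshift : A.submatrix (Equiv.addRight k) (Equiv.addRight k) = A :=
    ext fun i j => hA i j k
  conv_rhs => rw [← hshift, inv_submatrix_equiv]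
  rfl

theorem IsCirculant.mul_apply_add_add [Fintype G] [DecidableEq G] {K : Type*} [CommRing K]
    [IsDomain K] {A B : Matrix G G K} {d₁ d₂ : G → K} (hA : A.IsCirculant) (hB : B.IsCirculant)
    (h : B = diagonal d₁ * A * diagonal d₂) {i j : G} (hij : A i j ≠ 0) (k : G) :
    d₁ (i + k) * d₂ (j + k) = d₁ i * d₂ j := by
  have hk := hB i j k
  rw [h, mul_diagonal, mul_diagonal, diagonal_mul, diagonal_mul, hA] at hk
  exact mul_right_cancel₀ hij (by linear_combination hk)

theorem IsCirculant.exists_apply_zero_ne_zero {α : Type*} [Zero α] {A : Matrix G G α}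
    (hA : A.IsCirculant) (hA0 : A ≠ 0) : ∃ s, A s 0 ≠ 0 := by
  contrapose! hA0
  ext i j
  have hij := hA (i - j) 0 j
  rw [sub_add_cancel, zero_add] at hij
  rw [hij, hA0, zero_apply]

section

variable [Fintype G] [DecidableEq G] {K : Type*} [Field K] {A B : Matrix G G K} {d₁ d₂ : G → K}

theorem IsCirculant.pow_natCard_eq (hA : A.IsCirculant) (hB : B.IsCirculant)
    (h : B = diagonal d₁ * A * diagonal d₂) (hd₁ : ∀ i, d₁ i ≠ 0) (hd₂ : ∀ j, d₂ j ≠ 0)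
    {i i' j : G} (hi : A i j ≠ 0) (hi' : A i' j ≠ 0) : d₁ i ^ Nat.card G = d₁ i' ^ Nat.card G := by
  have hstep : ∀ y, d₁ (y + (i' - i)) = d₁ i' / d₁ i * d₁ y := by
    intro y
    have h₁ := hA.mul_apply_add_add hB h hi (y - i)
    have h₂ := hA.mul_apply_add_add hB h hi' (y - i)
    rw [add_sub_cancel] at h₁
    rw [show i' + (y - i) = y + (i' - i) by abel] at h₂
    rw [div_mul_eq_mul_div, eq_div_iff (hd₁ i)]
    exact mul_right_cancel₀ (hd₂ j) (by linear_combination d₁ y * h₂ - d₁ (y + (i' - i)) * h₁)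
  have hq := pow_natCard_eq_one_of_forall_add_eq_mul hstep (hd₁ i)
  rw [div_pow, div_eq_one_iff_eq (pow_ne_zero _ (hd₁ i))] at hq
  exact hq.symm

theorem IsCirculant.exists_diagonal_pow_natCard (hA : A.IsCirculant) (hB : B.IsCirculant)
    (h : B = diagonal d₁ * A * diagonal d₂) (hd₁ : ∀ i, d₁ i ≠ 0) (hd₂ : ∀ j, d₂ j ≠ 0)
    {s : G} (hs : A s 0 ≠ 0) :
    ∃ e₁ e₂ : G → K, (∀ i, e₁ i ≠ 0) ∧ (∀ j, e₂ j ≠ 0) ∧ e₁ ^ Nat.card G = 1 ∧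
      e₂ ^ Nat.card G = (fun _ => (d₁ s * d₂ 0) ^ Nat.card G) ∧
      B = diagonal e₁ * A * diagonal e₂ := by
  set N := Nat.card G
  have hN : N ≠ 0 := Nat.card_pos.ne'
  set ρ : K → K := Function.invFun fun y => y ^ N
  have hρ : ∀ x, ρ (x ^ N) ^ N = x ^ N := fun x => Function.invFun_eq ⟨x, rfl⟩
  have hρ0 : ∀ x, x ≠ 0 → ρ (x ^ N) ≠ 0 := fun x hx h0 =>
    pow_ne_zero N hx (by rw [← hρ x, h0, zero_pow hN])
  have hcol : ∀ i j, A i j ≠ 0 → d₁ i ^ N = d₁ (s + j) ^ N := fun i j hij =>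
    hA.pow_natCard_eq hB h hd₁ hd₂ hij (by simpa using (hA s 0 j).trans_ne hs)
  refine ⟨d₁ * fun i => (ρ (d₁ i ^ N))⁻¹, d₂ * fun j => ρ (d₁ (s + j) ^ N),
    fun i => mul_ne_zero (hd₁ i) (inv_ne_zero (hρ0 _ (hd₁ i))),
    fun j => mul_ne_zero (hd₂ j) (hρ0 _ (hd₁ _)), ?_, ?_, ?_⟩
  · funext i
    simp only [Pi.pow_apply, Pi.mul_apply, Pi.one_apply]
    rw [mul_pow, inv_pow, hρ, mul_inv_cancel₀ (pow_ne_zero _ (hd₁ i))]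
  · funext j
    have hrow := hA.mul_apply_add_add hB h hs j
    rw [zero_add] at hrow
    simp only [Pi.pow_apply, Pi.mul_apply]
    rw [mul_pow, hρ, ← mul_pow, mul_comm, hrow]
  · rw [diagonal_mul_mul_diagonal_eq_of_mul_eq_one, h]
    intro i j hij
    rw [hcol i j hij]
    exact inv_mul_cancel₀ (hρ0 _ (hd₁ _))

theorem IsCirculant.exists_isDiag_pow_natCard_eq_smul_one (hA : A.IsCirculant)
    (hB : B.IsCirculant) (hA0 : A ≠ 0) {D₁ D₂ : Matrix G G K} (hD₁ : D₁.IsDiag)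
    (hD₂ : D₂.IsDiag) (hdet₁ : D₁.det ≠ 0) (hdet₂ : D₂.det ≠ 0) (h : B = D₁ * A * D₂) :
    ∃ (D₁ D₂ : Matrix G G K) (k₁ k₂ : K),
      D₁.IsDiag ∧ D₂.IsDiag ∧ D₁.det ≠ 0 ∧ D₂.det ≠ 0 ∧ k₁ ≠ 0 ∧ k₂ ≠ 0 ∧
      D₁ ^ Nat.card G = k₁ • 1 ∧ D₂ ^ Nat.card G = k₂ • 1 ∧ B = D₁ * A * D₂ := by
  obtain ⟨d₁, hd₁, rfl⟩ := isDiag_and_det_ne_zero_iff.mp ⟨hD₁, hdet₁⟩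
  obtain ⟨d₂, hd₂, rfl⟩ := isDiag_and_det_ne_zero_iff.mp ⟨hD₂, hdet₂⟩
  obtain ⟨s, hs⟩ := hA.exists_apply_zero_ne_zero hA0
  obtain ⟨e₁, e₂, he₁, he₂, hpow₁, hpow₂, hB'⟩ := hA.exists_diagonal_pow_natCard hB h hd₁ hd₂ hs
  obtain ⟨hdiag₁, hdet₁'⟩ := isDiag_and_det_ne_zero_iff.mpr ⟨e₁, he₁, rfl⟩
  obtain ⟨hdiag₂, hdet₂'⟩ := isDiag_and_det_ne_zero_iff.mpr ⟨e₂, he₂, rfl⟩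
  refine ⟨diagonal e₁, diagonal e₂, 1, (d₁ s * d₂ 0) ^ Nat.card G, hdiag₁, hdiag₂, hdet₁', hdet₂',
    one_ne_zero, pow_ne_zero _ (mul_ne_zero (hd₁ s) (hd₂ 0)), ?_, ?_, hB'⟩
  · rw [diagonal_pow, hpow₁, one_smul]
    exact diagonal_one
  · rw [diagonal_pow, hpow₂, smul_one_eq_diagonal]

end

end Matrix

theorem circulantM_isCirculant {n : ℕ} [NeZero n] {α : Type*} (c : Fin n → α) :
    (circulantM c).IsCirculant :=
  fun i j k => congrArg c (add_sub_add_right_eq_sub j i k)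

theorem circulant_semiOrthogonal_iff_general {n : ℕ} {F : Type*} [Field F]
    (c : Fin n → F) (A : Matrix (Fin n) (Fin n) F) (hA : A = circulantM c) :
    (A.det ≠ 0 ∧ ∃ D₁ D₂ : Matrix (Fin n) (Fin n) F,
        D₁.IsDiag ∧ D₂.IsDiag ∧ D₁.det ≠ 0 ∧ D₂.det ≠ 0 ∧ (A⁻¹)ᵀ = D₁ * A * D₂) ↔
    (A.det ≠ 0 ∧ ∃ (D₁ D₂ : Matrix (Fin n) (Fin n) F) (k₁ k₂ : F),
        D₁.IsDiag ∧ D₂.IsDiag ∧ D₁.det ≠ 0 ∧ D₂.det ≠ 0 ∧ k₁ ≠ 0 ∧ k₂ ≠ 0 ∧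
        D₁ ^ n = k₁ • (1 : Matrix (Fin n) (Fin n) F) ∧
        D₂ ^ n = k₂ • (1 : Matrix (Fin n) (Fin n) F) ∧
        (A⁻¹)ᵀ = D₁ * A * D₂) := by
  constructor
  · rintro ⟨hdet, D₁, D₂, hD₁, hD₂, hdet₁, hdet₂, hB⟩
    refine ⟨hdet, ?_⟩
    rcases eq_or_ne n 0 with rfl | hn
    · exact ⟨1, 1, 1, 1, isDiag_one, isDiag_one, by simp, by simp, one_ne_zero, one_ne_zero,
        by simp, by simp, ext fun i => i.elim0⟩
    have : NeZero n := ⟨hn⟩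
    have hA0 : A ≠ 0 := by
      rintro rfl
      exact hdet det_zero
    have hcirc : A.IsCirculant := hA ▸ circulantM_isCirculant c
    simpa only [Nat.card_fin] using
      hcirc.exists_isDiag_pow_natCard_eq_smul_one hcirc.inv.transpose hA0 hD₁ hD₂ hdet₁ hdet₂ hB
  · rintro ⟨hdet, D₁, D₂, -, -, hD₁, hD₂, hdet₁, hdet₂, -, -, -, -, hB⟩
    exact ⟨hdet, D₁, D₂, hD₁, hD₂, hdet₁, hdet₂, hB⟩

/-- Let `A` be an `n × n` circulant matrix over a finite field `F`. Then `A` is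
semi-orthogonal (i.e. `A` is non-singular and there exist non-singular diagonal matrices
`D₁, D₂` with `(A⁻¹)ᵀ = D₁ * A * D₂`) if and only if there exist non-singular diagonal
matrices `D₁, D₂` such that `D₁ ^ n = k₁ • I` and `D₂ ^ n = k₂ • I` for some non-zero scalars
`k₁, k₂ ∈ F`, and `(A⁻¹)ᵀ = D₁ * A * D₂`. -/
theorem circulant_semiOrthogonal_iff {n : ℕ} {F : Type*} [Field F] [Fintype F]
    (c : Fin n → F) (A : Matrix (Fin n) (Fin n) F) (hA : A = circulantM c) :
    (A.det ≠ 0 ∧ ∃ D₁ D₂ : Matrix (Fin n) (Fin n) F,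
        D₁.IsDiag ∧ D₂.IsDiag ∧ D₁.det ≠ 0 ∧ D₂.det ≠ 0 ∧ (A⁻¹)ᵀ = D₁ * A * D₂) ↔
    (A.det ≠ 0 ∧ ∃ (D₁ D₂ : Matrix (Fin n) (Fin n) F) (k₁ k₂ : F),
        D₁.IsDiag ∧ D₂.IsDiag ∧ D₁.det ≠ 0 ∧ D₂.det ≠ 0 ∧ k₁ ≠ 0 ∧ k₂ ≠ 0 ∧
        D₁ ^ n = k₁ • (1 : Matrix (Fin n) (Fin n) F) ∧
        D₂ ^ n = k₂ • (1 : Matrix (Fin n) (Fin n) F) ∧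
        (A⁻¹)ᵀ = D₁ * A * D₂) :=
  circulant_semiOrthogonal_iff_general c A hA
end

section
/- Let d ≥ 1 and let A be a circulant, semi-orthogonal matrix of order 2^d × 2^d over a finite field F of characteristic 2, with associated non-singular diagonal matrices D₁ and D₂ satisfying (A⁻¹)ᵀ = D₁·A·D₂, D₁^{2^d} = k₁·I and D₂^{2^d} = k₂·I for non-zero scalars k₁, k₂ ∈ F (such associated diagonal matrices exist by the characterization of circulant semi-orthogonal matrices). Then trace(D₁) = 0 and trace(D₂) = 0. -/
open Matrix

lemma trace_zero_aux {F : Type*} [Field F] [CharP F 2] {d : ℕ} (hd : 1 ≤ d)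
    (D : Matrix (Fin (2 ^ d)) (Fin (2 ^ d)) F) (hdiag : D.IsDiag) (k : F)
    (hp : D ^ (2 ^ d) = k • (1 : Matrix (Fin (2 ^ d)) (Fin (2 ^ d)) F)) : D.trace = 0 := by
  have hD : Matrix.diagonal (fun i => D i i) = D := hdiag.diagonal_diag
  have hpow : ∀ i : Fin (2 ^ d), (D i i) ^ (2 ^ d) = k := by
    intro i
    have h := congrArg (fun M : Matrix (Fin (2 ^ d)) (Fin (2 ^ d)) F => M i i) hp
    rw [← hD, Matrix.diagonal_pow] at h
    simpa using h
  haveI : NeZero (2 ^ d) := ⟨pow_ne_zero d two_ne_zero⟩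
  have hconst : ∀ i : Fin (2 ^ d), D i i = D 0 0 := by
    intro i
    have h : (D i i - D 0 0) ^ (2 ^ d) = 0 := by
      rw [sub_pow_char_pow, hpow i, hpow 0, sub_self]
    have := pow_eq_zero_iff (NeZero.ne (2 ^ d)) |>.mp h
    exact sub_eq_zero.mp this
  have : D.trace = ∑ i : Fin (2 ^ d), D i i := rfl
  rw [this, Finset.sum_congr rfl (fun i _ => hconst i), Finset.sum_const, Finset.card_univ,
    Fintype.card_fin, nsmul_eq_mul, Nat.cast_pow]
  have h2 : ((2 : ℕ) : F) = 0 := by exact_mod_cast CharP.cast_eq_zero F 2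
  rw [h2, zero_pow (by omega : d ≠ 0), zero_mul]

/-- Let `d ≥ 1` and let `A` be a circulant, semi-orthogonal matrix of order
`2^d × 2^d` over a finite field `F` of characteristic 2, with associated non-singular diagonal
matrices `D₁, D₂` satisfying `(A⁻¹)ᵀ = D₁ * A * D₂`, `D₁ ^ (2^d) = k₁ • I` and
`D₂ ^ (2^d) = k₂ • I` for non-zero scalars `k₁, k₂ ∈ F`. Then `trace D₁ = 0` and
`trace D₂ = 0`. -/
theorem trace_eq_zero_of_circulant_semiOrthogonal_two_pow {F : Type*} [Field F] [Fintype F]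
    [CharP F 2] {d : ℕ} (hd : 1 ≤ d)
    (c : Fin (2 ^ d) → F) (A : Matrix (Fin (2 ^ d)) (Fin (2 ^ d)) F) (hA : A = circulantM c)
    (hAdet : A.det ≠ 0)
    (D₁ D₂ : Matrix (Fin (2 ^ d)) (Fin (2 ^ d)) F)
    (hD₁diag : D₁.IsDiag) (hD₂diag : D₂.IsDiag)
    (hD₁det : D₁.det ≠ 0) (hD₂det : D₂.det ≠ 0)
    (k₁ k₂ : F) (hk₁ : k₁ ≠ 0) (hk₂ : k₂ ≠ 0)
    (hp₁ : D₁ ^ (2 ^ d) = k₁ • (1 : Matrix (Fin (2 ^ d)) (Fin (2 ^ d)) F))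
    (hp₂ : D₂ ^ (2 ^ d) = k₂ • (1 : Matrix (Fin (2 ^ d)) (Fin (2 ^ d)) F))
    (hso : (A⁻¹)ᵀ = D₁ * A * D₂) :
    D₁.trace = 0 ∧ D₂.trace = 0 :=
  ⟨trace_zero_aux hd D₁ hD₁diag k₁ hp₁, trace_zero_aux hd D₂ hD₂diag k₂ hp₂⟩
end

section
/- Let k = 2^i·n where i > 1 and n ≥ 3 is odd, and let A be a k×k circulant matrix over a finite field F of characteristic 2. Suppose A is semi-orthogonal with associated non-singular diagonal matrices D₁ and D₂, i.e., (A⁻¹)ᵀ = D₁·A·D₂. If A is MDS, then trace(D₁) = 0 and trace(D₂) = 0. -/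
open Matrix

/-- A square matrix over a field is MDS if every square submatrix (including the matrix
itself) is non-singular. -/
def IsMDS {n : ℕ} {F : Type*} [Field F] (A : Matrix (Fin n) (Fin n) F) : Prop :=
  ∀ (s : ℕ) (r c : Fin s → Fin n), Function.Injective r → Function.Injective c →
    (A.submatrix r c).det ≠ 0

/-!
Write `D₁ = diag d₁`, `D₂ = diag d₂` and `A = (a_{pq})`, so that semi-orthogonality reads
`(A⁻¹)_{qp} = d₁ p · a_{pq} · d₂ q`. Both `A` and `A⁻¹` are invariant under the cyclic shift
`p ↦ p + 1`, and every entry of an MDS matrix is nonzero, hence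
`d₁ (p+1) d₂ (q+1) = d₁ p d₂ q`. So each `dᵢ` satisfies `dᵢ (p+1) = γ dᵢ p` for a constant `γ`.
Then `tr Dᵢ = γ tr Dᵢ`, so either `tr Dᵢ = 0` or `γ = 1`; in the latter case `dᵢ` is constant
and `tr Dᵢ = k dᵢ 0 = 0` since `k` is even and the characteristic is `2`.
-/

namespace Fin

variable {k : ℕ} [NeZero k]

open Fin.NatCast in
theorem apply_eq_apply_zero_of_apply_add_one_eq {α : Type*} {d : Fin k → α}
    (h : ∀ p, d (p + 1) = d p) (p : Fin k) : d p = d 0 := by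
  have hcast : ∀ m : ℕ, d m = d 0 := by
    intro m
    induction m with
    | zero => rfl
    | succ m ih => rw [Nat.cast_succ, h, ih]
  rw [← hcast p, Fin.cast_val_eq_self]

theorem sum_eq_zero_of_apply_add_one_eq_mul {R : Type*} [Ring R] [NoZeroDivisors R] [CharP R 2]
    (hk : Even k) {d : Fin k → R} {γ : R} (h : ∀ p, d (p + 1) = d p * γ) : ∑ p, d p = 0 := by
  have hshift : (∑ p, d p) * (γ - 1) = 0 := by
    simp only [Finset.sum_mul, mul_sub, mul_one, ← h]
    exact sub_eq_zero.mpr (Equiv.sum_comp (Equiv.addRight 1) d)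
  rcases mul_eq_zero.mp hshift with hsum | hγ
  · exact hsum
  · have hconst := apply_eq_apply_zero_of_apply_add_one_eq (d := d)
      (by simpa [sub_eq_zero.mp hγ] using h)
    rw [Finset.sum_congr rfl fun p _ => hconst p, Finset.sum_const, Finset.card_univ,
      Fintype.card_fin, nsmul_eq_mul, (CharP.cast_eq_zero_iff R 2 k).2 hk.two_dvd, zero_mul]

theorem sum_eq_zero_of_apply_add_one_mul_apply_add_one_eq {F : Type*} [Field F] [CharP F 2]
    (hk : Even k) {u v : Fin k → F} (hv : v 1 ≠ 0)
    (h : ∀ p q, u (p + 1) * v (q + 1) = u p * v q) : ∑ p, u p = 0 :=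
  sum_eq_zero_of_apply_add_one_eq_mul hk (γ := v 0 / v 1) fun p => by
    rw [mul_div_assoc', eq_div_iff hv, ← h p 0, zero_add]

end Fin

theorem circulantM_submatrix_addRight {k : ℕ} [NeZero k] {α : Type*} (c : Fin k → α)
    (s : Fin k) :
    (circulantM c).submatrix (Equiv.addRight s) (Equiv.addRight s) = circulantM c := by
  ext p q
  simp [circulantM]

theorem IsMDS.apply_ne_zero {k : ℕ} {F : Type*} [Field F] {A : Matrix (Fin k) (Fin k) F}
    (hA : IsMDS A) (p q : Fin k) : A p q ≠ 0 := by
  simpa using hA 1 (fun _ => p) (fun _ => q) (Function.injective_of_subsingleton _)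
    (Function.injective_of_subsingleton _)

namespace Matrix

variable {n F : Type*} [Fintype n] [DecidableEq n] [Field F]

theorem IsDiag.diag_ne_zero {D : Matrix n n F} (hD : D.IsDiag) (hdet : D.det ≠ 0) (j : n) :
    D.diag j ≠ 0 := by
  rw [← hD.diagonal_diag, det_diagonal] at hdet
  exact Finset.prod_ne_zero_iff.mp hdet j (Finset.mem_univ j)

theorem apply_perm_mul_apply_perm_of_transpose_inv_eq {A : Matrix n n F} {σ : Equiv.Perm n}
    (hσ : A.submatrix σ σ = A) (hA : ∀ p q, A p q ≠ 0) {d₁ d₂ : n → F}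
    (hso : (A⁻¹)ᵀ = diagonal d₁ * A * diagonal d₂) (p q : n) :
    d₁ (σ p) * d₂ (σ q) = d₁ p * d₂ q := by
  have hentry : ∀ p q, A⁻¹ q p = d₁ p * A p q * d₂ q := fun p q => by
    simpa [mul_diagonal, diagonal_mul] using congrFun (congrFun hso p) q
  have hinv : A⁻¹ (σ q) (σ p) = A⁻¹ q p := by
    conv_rhs => rw [← hσ, inv_submatrix_equiv]
    rfl
  have hAσ : A (σ p) (σ q) = A p q := congrFun (congrFun hσ p) q
  apply mul_left_cancel₀ (hA p q)
  calc A p q * (d₁ (σ p) * d₂ (σ q)) = d₁ (σ p) * A (σ p) (σ q) * d₂ (σ q) := by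
        rw [hAσ]; ring
    _ = A⁻¹ q p := by rw [← hentry, hinv]
    _ = A p q * (d₁ p * d₂ q) := by rw [hentry]; ring

end Matrix

theorem trace_eq_zero_of_circulant_semiOrthogonal_mds_general {F : Type*} [Field F]
    [CharP F 2] {i n : ℕ} (hi : 1 < i) (hodd : Odd n)
    (c : Fin (2 ^ i * n) → F) (A : Matrix (Fin (2 ^ i * n)) (Fin (2 ^ i * n)) F)
    (hA : A = circulantM c)
    (D₁ D₂ : Matrix (Fin (2 ^ i * n)) (Fin (2 ^ i * n)) F)
    (hD₁diag : D₁.IsDiag) (hD₂diag : D₂.IsDiag)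
    (hD₁det : D₁.det ≠ 0) (hD₂det : D₂.det ≠ 0)
    (hso : (A⁻¹)ᵀ = D₁ * A * D₂)
    (hmds : IsMDS A) :
    D₁.trace = 0 ∧ D₂.trace = 0 := by
  have : NeZero (2 ^ i * n) := ⟨(Nat.mul_pos (by positivity) hodd.pos).ne'⟩
  have heven : Even (2 ^ i * n) := (Nat.even_pow.mpr ⟨even_two, by omega⟩).mul_right n
  rw [← hD₁diag.diagonal_diag, ← hD₂diag.diagonal_diag] at hso
  have hshift : ∀ p q, D₁.diag (p + 1) * D₂.diag (q + 1) = D₁.diag p * D₂.diag q :=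
    apply_perm_mul_apply_perm_of_transpose_inv_eq (σ := Equiv.addRight 1)
      (hA ▸ circulantM_submatrix_addRight c 1) hmds.apply_ne_zero hso
  exact ⟨Fin.sum_eq_zero_of_apply_add_one_mul_apply_add_one_eq heven
      (hD₂diag.diag_ne_zero hD₂det 1) hshift,
    Fin.sum_eq_zero_of_apply_add_one_mul_apply_add_one_eq heven
      (hD₁diag.diag_ne_zero hD₁det 1) fun p q => by rw [mul_comm, hshift, mul_comm]⟩

/-- Let `k = 2^i * n` with `i > 1` and `n ≥ 3` odd, and let `A` be a `k × k`
circulant matrix over a finite field `F` of characteristic 2. Suppose `A` is semi-orthogonal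
with associated non-singular diagonal matrices `D₁, D₂`, i.e. `(A⁻¹)ᵀ = D₁ * A * D₂`.
If `A` is MDS, then `trace D₁ = 0` and `trace D₂ = 0`. -/
theorem trace_eq_zero_of_circulant_semiOrthogonal_mds {F : Type*} [Field F] [Fintype F]
    [CharP F 2] {i n : ℕ} (hi : 1 < i) (hn : 3 ≤ n) (hodd : Odd n)
    (c : Fin (2 ^ i * n) → F) (A : Matrix (Fin (2 ^ i * n)) (Fin (2 ^ i * n)) F)
    (hA : A = circulantM c) (hAdet : A.det ≠ 0)
    (D₁ D₂ : Matrix (Fin (2 ^ i * n)) (Fin (2 ^ i * n)) F)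
    (hD₁diag : D₁.IsDiag) (hD₂diag : D₂.IsDiag)
    (hD₁det : D₁.det ≠ 0) (hD₂det : D₂.det ≠ 0)
    (hso : (A⁻¹)ᵀ = D₁ * A * D₂)
    (hmds : IsMDS A) :
    D₁.trace = 0 ∧ D₂.trace = 0 :=
  trace_eq_zero_of_circulant_semiOrthogonal_mds_general hi hodd c A hA D₁ D₂ hD₁diag hD₂diag hD₁det
    hD₂det hso hmds
end

section
/- Let R be a commutative ring of characteristic 2, let k be a positive integer with k ≡ 0 (mod 4), and let a₀, a₁, …, a_{k−1} ∈ R with indices read modulo k. Then the sum over odd j with 1 ≤ j ≤ k/2 − 1 of Σ_{i=0}^{k−1} a_i·a_{i+j} equals (a₀ + a₂ + ⋯ + a_{k−2})·(a₁ + a₃ + ⋯ + a_{k−1}). -/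
/-- Let `R` be a commutative ring of characteristic 2, let `k` be a positive
integer with `k ≡ 0 (mod 4)`, and let `a₀, …, a_{k-1} ∈ R` with indices read modulo `k`.
Then the sum over odd `j` with `1 ≤ j ≤ k/2 - 1` of `∑_{i=0}^{k-1} a_i * a_{i+j}` equals
`(a₀ + a₂ + ⋯ + a_{k-2}) * (a₁ + a₃ + ⋯ + a_{k-1})`. -/
theorem sum_shifted_products_eq_even_odd_prod {R : Type*} [CommRing R] [CharP R 2]
    {k : ℕ} (hk : 0 < k) (hk4 : k % 4 = 0) (a : ZMod k → R) :
    ∑ j ∈ (Finset.range (k / 2)).filter (fun j => Odd j),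
      ∑ i ∈ Finset.range k, a (i : ZMod k) * a ((i : ZMod k) + (j : ZMod k)) =
    (∑ i ∈ (Finset.range k).filter (fun i => Even i), a (i : ZMod k)) *
    (∑ i ∈ (Finset.range k).filter (fun i => Odd i), a (i : ZMod k)) := by
  haveI : NeZero k := ⟨hk.ne'⟩
  have h2k : 2 ∣ k := by omega
  have key : ∀ g : ZMod k → R, ∑ i ∈ Finset.range k, g (i : ZMod k) = ∑ x : ZMod k, g x := by
    intro g
    refine Finset.sum_nbij' (i := fun i => (i : ZMod k)) (j := fun x => x.val) ?_ ?_ ?_ ?_ ?_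
    · intro i hi; exact Finset.mem_univ _
    · intro x hx; exact Finset.mem_range.mpr (ZMod.val_lt x)
    · intro i hi; exact ZMod.val_cast_of_lt (Finset.mem_range.mp hi)
    · intro x hx; exact ZMod.natCast_rightInverse x
    · intro i hi; rfl
  have keyE : ∑ i ∈ (Finset.range k).filter (fun i => Even i), a (i : ZMod k)
      = ∑ x ∈ Finset.univ.filter (fun x : ZMod k => x.val % 2 = 0), a x := by
    refine Finset.sum_nbij' (i := fun i => (i : ZMod k)) (j := fun x => x.val) ?_ ?_ ?_ ?_ ?_
    · intro i hi
      simp only [Finset.mem_filter, Finset.mem_range, Finset.mem_univ, true_and,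
        Nat.even_iff] at *
      rw [ZMod.val_cast_of_lt hi.1]; omega
    · intro x hx
      simp only [Finset.mem_filter, Finset.mem_range, Finset.mem_univ, true_and,
        Nat.even_iff] at *
      exact ⟨ZMod.val_lt x, by omega⟩
    · intro i hi
      simp only [Finset.mem_filter, Finset.mem_range] at hi
      exact ZMod.val_cast_of_lt hi.1
    · intro x hx; exact ZMod.natCast_rightInverse x
    · intro i hi; rfl
  have keyO : ∑ i ∈ (Finset.range k).filter (fun i => Odd i), a (i : ZMod k)
      = ∑ x ∈ Finset.univ.filter (fun x : ZMod k => x.val % 2 = 1), a x := by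
    refine Finset.sum_nbij' (i := fun i => (i : ZMod k)) (j := fun x => x.val) ?_ ?_ ?_ ?_ ?_
    · intro i hi
      simp only [Finset.mem_filter, Finset.mem_range, Finset.mem_univ, true_and,
        Nat.odd_iff] at *
      rw [ZMod.val_cast_of_lt hi.1]; omega
    · intro x hx
      simp only [Finset.mem_filter, Finset.mem_range, Finset.mem_univ, true_and,
        Nat.odd_iff] at *
      exact ⟨ZMod.val_lt x, by omega⟩
    · intro i hi
      simp only [Finset.mem_filter, Finset.mem_range] at hi
      exact ZMod.val_cast_of_lt hi.1
    · intro x hx; exact ZMod.natCast_rightInverse x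
    · intro i hi; rfl
  rw [keyE, keyO, Finset.sum_mul_sum]
  have step : ∑ j ∈ (Finset.range (k / 2)).filter (fun j => Odd j),
      ∑ i ∈ Finset.range k, a (i : ZMod k) * a ((i : ZMod k) + (j : ZMod k)) =
      ∑ j ∈ (Finset.range (k / 2)).filter (fun j => Odd j),
      ∑ x : ZMod k, a x * a (x + (j : ZMod k)) :=
    Finset.sum_congr rfl fun j _ => key (fun x => a x * a (x + (j : ZMod k)))
  rw [step]
  rw [← Finset.sum_product', ← Finset.sum_product']
  have hpar : ∀ x y : ZMod k, (x + y).val % 2 = (x.val + y.val) % 2 := by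
    intro x y
    rw [ZMod.val_add, Nat.mod_mod_of_dvd _ h2k]
  have hsub : ∀ x y : ZMod k, ((y - x).val + x.val) % 2 = y.val % 2 := by
    intro x y
    have := hpar x (y - x)
    rw [add_sub_cancel] at this
    omega
  have hvlt : ∀ x : ZMod k, x.val < k := fun x => ZMod.val_lt x
  refine Finset.sum_nbij'
    (i := fun p : ℕ × ZMod k => if p.2.val % 2 = 0 then (p.2, p.2 + (p.1 : ZMod k))
      else (p.2 + (p.1 : ZMod k), p.2))
    (j := fun q : ZMod k × ZMod k => if (q.2 - q.1).val < k / 2 then ((q.2 - q.1).val, q.1)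
      else (k - (q.2 - q.1).val, q.2)) ?_ ?_ ?_ ?_ ?_
  · rintro ⟨j, x⟩ hp
    simp only [Finset.mem_product, Finset.mem_filter, Finset.mem_range, Finset.mem_univ,
      true_and, Nat.odd_iff] at hp
    obtain ⟨⟨hjlt, hjodd⟩, -⟩ := hp
    have hjk : j < k := by omega
    have hjv : ((j : ZMod k)).val = j := ZMod.val_cast_of_lt hjk
    have h1 := hpar x (j : ZMod k)
    rw [hjv] at h1
    dsimp only
    by_cases hx : x.val % 2 = 0
    · rw [if_pos hx]
      exact Finset.mk_mem_product (Finset.mem_filter.mpr ⟨Finset.mem_univ _, hx⟩)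
        (Finset.mem_filter.mpr ⟨Finset.mem_univ _, by omega⟩)
    · rw [if_neg hx]
      exact Finset.mk_mem_product (Finset.mem_filter.mpr ⟨Finset.mem_univ _, by omega⟩)
        (Finset.mem_filter.mpr ⟨Finset.mem_univ _, by omega⟩)
  · rintro ⟨x, y⟩ hq
    simp only [Finset.mem_product, Finset.mem_filter, Finset.mem_univ, true_and] at hq
    obtain ⟨hx, hy⟩ := hq
    have hd := hsub x y
    have hdlt := hvlt (y - x)
    dsimp only
    by_cases h : (y - x).val < k / 2
    · rw [if_pos h]
      exact Finset.mk_mem_product (Finset.mem_filter.mpr ⟨Finset.mem_range.mpr h,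
        Nat.odd_iff.mpr (by omega)⟩) (Finset.mem_univ _)
    · rw [if_neg h]
      refine Finset.mk_mem_product (Finset.mem_filter.mpr ⟨Finset.mem_range.mpr ?_,
        Nat.odd_iff.mpr (by omega)⟩) (Finset.mem_univ _)
      omega
  · rintro ⟨j, x⟩ hp
    simp only [Finset.mem_product, Finset.mem_filter, Finset.mem_range, Finset.mem_univ,
      true_and, Nat.odd_iff] at hp
    obtain ⟨⟨hjlt, hjodd⟩, -⟩ := hp
    have hjk : j < k := by omega
    have hjv : ((j : ZMod k)).val = j := ZMod.val_cast_of_lt hjk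
    dsimp only
    by_cases hx : x.val % 2 = 0
    · rw [if_pos hx]
      dsimp only
      have he : (x + (j : ZMod k)) - x = (j : ZMod k) := by ring
      rw [he, hjv, if_pos hjlt]
    · rw [if_neg hx]
      dsimp only
      have he : x - (x + (j : ZMod k)) = -(j : ZMod k) := by ring
      rw [he]
      have hj0 : (j : ZMod k) ≠ 0 := by
        intro h
        rw [h, ZMod.val_zero] at hjv
        omega
      rw [ZMod.neg_val, if_neg hj0, hjv]
      have hnl : ¬ (k - j < k / 2) := by omega
      rw [if_neg hnl]
      congr 1
      omega
  · rintro ⟨x, y⟩ hq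
    simp only [Finset.mem_product, Finset.mem_filter, Finset.mem_univ, true_and] at hq
    obtain ⟨hx, hy⟩ := hq
    have hd := hsub x y
    have hdlt := hvlt (y - x)
    dsimp only
    by_cases h : (y - x).val < k / 2
    · rw [if_pos h]
      dsimp only
      rw [if_pos hx, ZMod.natCast_val, ZMod.cast_id, add_sub_cancel]
    · rw [if_neg h]
      dsimp only
      have hyodd : ¬ (y.val % 2 = 0) := by omega
      rw [if_neg hyodd]
      have hcast : ((k - (y - x).val : ℕ) : ZMod k) = -(y - x) := by
        push_cast [Nat.cast_sub hdlt.le]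
        simp [ZMod.natCast_self, ZMod.natCast_val]
      rw [hcast]
      congr 1
      ring
  · rintro ⟨j, x⟩ hp
    dsimp only
    by_cases hx : x.val % 2 = 0
    · rw [if_pos hx]
    · rw [if_neg hx]
      exact mul_comm _ _
end

section
/- Let R be a commutative ring of characteristic 2, let n ≥ 3 be odd, set k = 2n, and let a₀, a₁, …, a_{k−1} ∈ R with indices read modulo k. Then the sum over odd j with 1 ≤ j ≤ n − 2 of Σ_{i=0}^{k−1} a_i·a_{i+j}, plus Σ_{i=0}^{n−1} a_i·a_{i+n}, equals (a₀ + a₂ + ⋯ + a_{k−2})·(a₁ + a₃ + ⋯ + a_{k−1}). -/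
private lemma sum_range_cast' {R : Type*} [AddCommMonoid R] {k : ℕ} [NeZero k]
    (f : ZMod k → R) :
    ∑ i ∈ Finset.range k, f (i : ZMod k) = ∑ x : ZMod k, f x := by
  refine Finset.sum_nbij' (fun i => (i : ZMod k)) (fun x => x.val)
    (by simp) (fun x _ => Finset.mem_range.mpr (ZMod.val_lt x))
    (fun i hi => ZMod.val_cast_of_lt (Finset.mem_range.mp hi))
    (fun x _ => ZMod.natCast_zmod_val x) (fun i _ => rfl)

private lemma sum_filter_cast' {R : Type*} [AddCommMonoid R] {k : ℕ} [NeZero k]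
    (f : ZMod k → R) (p : ℕ → Prop) [DecidablePred p] :
    ∑ i ∈ (Finset.range k).filter p, f (i : ZMod k)
      = ∑ x ∈ Finset.univ.filter (fun x : ZMod k => p x.val), f x := by
  refine Finset.sum_nbij' (fun i => (i : ZMod k)) (fun x => x.val) ?_ ?_ ?_ ?_ ?_
  · intro i hi
    simp only [Finset.mem_filter, Finset.mem_range] at hi
    simp [Finset.mem_filter, ZMod.val_cast_of_lt hi.1, hi.2]
  · intro x hx
    simp only [Finset.mem_filter, Finset.mem_univ, true_and] at hx
    simp [Finset.mem_filter, Finset.mem_range, ZMod.val_lt, hx, ZMod.natCast_zmod_val]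
  · intro i hi
    simp only [Finset.mem_filter, Finset.mem_range] at hi
    exact ZMod.val_cast_of_lt hi.1
  · intro x _; exact ZMod.natCast_zmod_val x
  · intro i _; rfl

private lemma val_add_mod2 {k : ℕ} [NeZero k] (hk : 2 ∣ k) (x y : ZMod k) :
    (x + y).val % 2 = (x.val + y.val) % 2 := by
  rw [ZMod.val_add, Nat.mod_mod_of_dvd _ hk]

/-- Let `R` be a commutative ring of characteristic 2, let `n ≥ 3` be odd,
set `k = 2n`, and let `a₀, …, a_{k-1} ∈ R` with indices read modulo `k`. Then the sum over
odd `j` with `1 ≤ j ≤ n - 2` of `∑_{i=0}^{k-1} a_i * a_{i+j}`, plus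
`∑_{i=0}^{n-1} a_i * a_{i+n}`, equals
`(a₀ + a₂ + ⋯ + a_{k-2}) * (a₁ + a₃ + ⋯ + a_{k-1})`. -/
theorem sum_shifted_products_add_half_eq_even_odd_prod {R : Type*} [CommRing R] [CharP R 2]
    {n : ℕ} (hn : 3 ≤ n) (hodd : Odd n) (a : ZMod (2 * n) → R) :
    (∑ j ∈ (Finset.range (n - 1)).filter (fun j => Odd j),
      ∑ i ∈ Finset.range (2 * n),
        a (i : ZMod (2 * n)) * a ((i : ZMod (2 * n)) + (j : ZMod (2 * n)))) +
    (∑ i ∈ Finset.range n,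
        a (i : ZMod (2 * n)) * a ((i : ZMod (2 * n)) + (n : ZMod (2 * n)))) =
    (∑ i ∈ (Finset.range (2 * n)).filter (fun i => Even i), a (i : ZMod (2 * n))) *
    (∑ i ∈ (Finset.range (2 * n)).filter (fun i => Odd i), a (i : ZMod (2 * n))) := by
  classical
  have hn2 : n % 2 = 1 := Nat.odd_iff.mp hodd
  haveI : NeZero (2 * n) := ⟨by omega⟩
  have hdvd : 2 ∣ 2 * n := ⟨n, rfl⟩
  have hk0 : ((2 * n : ℕ) : ZMod (2 * n)) = 0 := ZMod.natCast_self (2 * n)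
  set E : Finset (ZMod (2 * n)) := Finset.univ.filter (fun x => Even x.val) with hE
  set O : Finset (ZMod (2 * n)) := Finset.univ.filter (fun x => Odd x.val) with hO
  set J : Finset ℕ := (Finset.range (n - 1)).filter (fun j => Odd j) with hJ
  set GE : ℕ → R := fun j => ∑ x ∈ E, a x * a (x + (j : ZMod (2 * n))) with hGE
  set GO : ℕ → R := fun j => ∑ x ∈ O, a x * a (x + (j : ZMod (2 * n))) with hGO
  have hvalcast : ∀ j : ℕ, j < 2 * n → ((j : ZMod (2 * n))).val = j :=
    fun j hj => ZMod.val_cast_of_lt hj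
  have hR1 : (∑ i ∈ (Finset.range (2 * n)).filter (fun i => Even i), a (i : ZMod (2 * n)))
      = ∑ x ∈ E, a x := sum_filter_cast' a Even
  have hR2 : (∑ i ∈ (Finset.range (2 * n)).filter (fun i => Odd i), a (i : ZMod (2 * n)))
      = ∑ x ∈ O, a x := sum_filter_cast' a Odd
  have hreidx : ∀ x ∈ E, (∑ y ∈ O, a x * a y) = ∑ d ∈ O, a x * a (x + d) := by
    intro x hx
    rw [hE, Finset.mem_filter, Nat.even_iff] at hx
    refine Finset.sum_nbij' (fun y => y - x) (fun d => x + d) ?_ ?_ ?_ ?_ ?_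
    · intro y hy
      simp only [hO, Finset.mem_filter, Finset.mem_univ, true_and, Nat.odd_iff] at hy ⊢
      have h2 := val_add_mod2 hdvd x (y - x)
      have hxy : x + (y - x) = y := by ring
      rw [hxy] at h2
      omega
    · intro d hd
      simp only [hO, Finset.mem_filter, Finset.mem_univ, true_and, Nat.odd_iff] at hd ⊢
      have h2 := val_add_mod2 hdvd x d
      omega
    · intro y _; beta_reduce; ring
    · intro d _; beta_reduce; ring
    · intro y _
      beta_reduce
      have hxy : x + (y - x) = y := by ring
      rw [hxy]
  have hIco : (∑ j ∈ (Finset.Ico (n + 1) (2 * n)).filter (fun j => Odd j), GE j)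
      = ∑ j ∈ J, GO j := by
    refine Finset.sum_nbij' (fun j => 2 * n - j) (fun j => 2 * n - j) ?_ ?_ ?_ ?_ ?_
    · intro j hj
      simp only [Finset.mem_filter, Finset.mem_Ico, Nat.odd_iff] at hj
      simp only [hJ, Finset.mem_filter, Finset.mem_range, Nat.odd_iff]
      omega
    · intro j hj
      simp only [hJ, Finset.mem_filter, Finset.mem_range, Nat.odd_iff] at hj
      simp only [Finset.mem_filter, Finset.mem_Ico, Nat.odd_iff]
      omega
    · intro j hj
      simp only [Finset.mem_filter, Finset.mem_Ico] at hj
      beta_reduce; omega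
    · intro j hj
      simp only [hJ, Finset.mem_filter, Finset.mem_range] at hj
      beta_reduce; omega
    · intro j hj
      simp only [Finset.mem_filter, Finset.mem_Ico, Nat.odd_iff] at hj
      beta_reduce
      have hjk : j ≤ 2 * n := le_of_lt hj.1.2
      have hcast : ((2 * n - j : ℕ) : ZMod (2 * n)) = -(j : ZMod (2 * n)) := by
        rw [Nat.cast_sub hjk, hk0, zero_sub]
      have hjval : ((j : ZMod (2 * n))).val = j := hvalcast j hj.1.2
      rw [hGE, hGO]
      beta_reduce
      refine Finset.sum_nbij' (fun x => x + (j : ZMod (2 * n)))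
        (fun x => x - (j : ZMod (2 * n))) ?_ ?_ ?_ ?_ ?_
      · intro x hx
        simp only [hE, Finset.mem_filter, Finset.mem_univ, true_and, Nat.even_iff] at hx
        simp only [hO, Finset.mem_filter, Finset.mem_univ, true_and, Nat.odd_iff]
        have h2 := val_add_mod2 hdvd x (j : ZMod (2 * n))
        omega
      · intro y hy
        simp only [hO, Finset.mem_filter, Finset.mem_univ, true_and, Nat.odd_iff] at hy
        simp only [hE, Finset.mem_filter, Finset.mem_univ, true_and, Nat.even_iff]
        have h2 := val_add_mod2 hdvd (y - (j : ZMod (2 * n))) (j : ZMod (2 * n))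
        have hxy : y - (j : ZMod (2 * n)) + (j : ZMod (2 * n)) = y := by ring
        rw [hxy] at h2
        omega
      · intro x _; beta_reduce; ring
      · intro y _; beta_reduce; ring
      · intro x _
        beta_reduce
        rw [hcast]
        have h3 : x + (j : ZMod (2 * n)) + -(j : ZMod (2 * n)) = x := by ring
        rw [h3, mul_comm]
  have hsplit : (∑ j ∈ (Finset.range (2 * n)).filter (fun j => Odd j), GE j)
      = (∑ j ∈ J, GE j) + GE n
        + ∑ j ∈ (Finset.Ico (n + 1) (2 * n)).filter (fun j => Odd j), GE j := by
    have h1 : (Finset.range (2 * n)).filter (fun j => Odd j)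
        = ((J ∪ {n}) ∪ (Finset.Ico (n + 1) (2 * n)).filter (fun j => Odd j)) := by
      ext j
      simp only [hJ, Finset.mem_filter, Finset.mem_range, Finset.mem_union,
        Finset.mem_singleton, Finset.mem_Ico, Nat.odd_iff]
      omega
    have hd1 : Disjoint (J : Finset ℕ) ({n} : Finset ℕ) := by
      rw [Finset.disjoint_left]
      intro j hj hj'
      simp only [hJ, Finset.mem_filter, Finset.mem_range] at hj
      simp only [Finset.mem_singleton] at hj'
      omega
    have hd2 : Disjoint (J ∪ {n}) ((Finset.Ico (n + 1) (2 * n)).filter (fun j => Odd j)) := by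
      rw [Finset.disjoint_left]
      intro j hj hj'
      simp only [hJ, Finset.mem_union, Finset.mem_filter, Finset.mem_range,
        Finset.mem_singleton] at hj
      simp only [Finset.mem_filter, Finset.mem_Ico] at hj'
      omega
    rw [h1, Finset.sum_union hd2, Finset.sum_union hd1, Finset.sum_singleton]
  have hhalf : (∑ i ∈ Finset.range n,
        a (i : ZMod (2 * n)) * a ((i : ZMod (2 * n)) + (n : ZMod (2 * n))))
      = GE n := by
    rw [hGE]
    beta_reduce
    have hnn : (n : ZMod (2 * n)) + (n : ZMod (2 * n)) = 0 := by
      have h4 : ((n : ℕ) : ZMod (2 * n)) + ((n : ℕ) : ZMod (2 * n))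
          = ((2 * n : ℕ) : ZMod (2 * n)) := by push_cast; ring
      rw [h4, hk0]
    refine Finset.sum_nbij'
      (fun i => if Even i then (i : ZMod (2 * n)) else ((i + n : ℕ) : ZMod (2 * n)))
      (fun x => if x.val < n then x.val else x.val - n) ?_ ?_ ?_ ?_ ?_
    · intro i hi
      rw [Finset.mem_range] at hi
      simp only [hE, Finset.mem_filter, Finset.mem_univ, true_and]
      by_cases h : Even i
      · rw [if_pos h, hvalcast i (by omega)]; exact h
      · rw [if_neg h, hvalcast (i + n) (by omega), Nat.even_iff]
        rw [Nat.even_iff] at h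
        omega
    · intro x hx
      simp only [hE, Finset.mem_filter, Finset.mem_univ, true_and] at hx
      have := ZMod.val_lt x
      simp only [Finset.mem_range]
      by_cases h : x.val < n
      · rw [if_pos h]; exact h
      · rw [if_neg h]; omega
    · intro i hi
      rw [Finset.mem_range] at hi
      beta_reduce
      by_cases h : Even i
      · rw [if_pos h, hvalcast i (by omega), if_pos hi]
      · rw [if_neg h, hvalcast (i + n) (by omega), if_neg (by omega)]
        omega
    · intro x hx
      simp only [hE, Finset.mem_filter, Finset.mem_univ, true_and, Nat.even_iff] at hx
      have hlt := ZMod.val_lt x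
      beta_reduce
      by_cases h : x.val < n
      · rw [if_pos h, if_pos (by rw [Nat.even_iff]; omega : Even x.val)]
        exact ZMod.natCast_zmod_val x
      · rw [if_neg h, if_neg (by rw [Nat.even_iff]; omega)]
        have h5 : x.val - n + n = x.val := by omega
        rw [h5]
        exact ZMod.natCast_zmod_val x
    · intro i hi
      rw [Finset.mem_range] at hi
      beta_reduce
      by_cases h : Even i
      · rw [if_pos h]
      · rw [if_neg h]
        have h1 : ((i + n : ℕ) : ZMod (2 * n)) = (i : ZMod (2 * n)) + (n : ZMod (2 * n)) := by
          push_cast; ring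
        rw [h1]
        have h2 : (i : ZMod (2 * n)) + (n : ZMod (2 * n)) + (n : ZMod (2 * n))
            = (i : ZMod (2 * n)) := by rw [add_assoc, hnn, add_zero]
        rw [h2, mul_comm]
  have hfilterO : Finset.univ.filter (fun x : ZMod (2 * n) => Odd x.val) = O := by rw [hO]
  calc (∑ j ∈ J, ∑ i ∈ Finset.range (2 * n),
          a (i : ZMod (2 * n)) * a ((i : ZMod (2 * n)) + (j : ZMod (2 * n))))
        + (∑ i ∈ Finset.range n,
          a (i : ZMod (2 * n)) * a ((i : ZMod (2 * n)) + (n : ZMod (2 * n))))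
      = (∑ j ∈ J, (GE j + GO j)) + GE n := by
        rw [hhalf]
        congr 1
        refine Finset.sum_congr rfl fun j hj => ?_
        rw [sum_range_cast' (fun x => a x * a (x + (j : ZMod (2 * n)))), hGE, hGO]
        beta_reduce
        rw [← Finset.sum_filter_add_sum_filter_not Finset.univ
          (fun x : ZMod (2 * n) => Even x.val)]
        congr 1
        apply Finset.sum_congr _ (fun _ _ => rfl)
        apply Finset.filter_congr
        intro x _
        simp [Nat.not_even_iff_odd]
    _ = ((∑ j ∈ J, GE j) + GE n) + ∑ j ∈ J, GO j := by
        rw [Finset.sum_add_distrib]; ring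
    _ = (∑ j ∈ (Finset.range (2 * n)).filter (fun j => Odd j), GE j) := by
        rw [hsplit, hIco]
    _ = ∑ d ∈ O, ∑ x ∈ E, a x * a (x + d) := by
        rw [sum_filter_cast' (fun d => ∑ x ∈ E, a x * a (x + d)) Odd, hfilterO]
    _ = ∑ x ∈ E, ∑ y ∈ O, a x * a y := by
        rw [Finset.sum_comm]
        exact (Finset.sum_congr rfl hreidx).symm
    _ = (∑ x ∈ E, a x) * (∑ y ∈ O, a y) := by
        rw [Finset.sum_mul]
        exact Finset.sum_congr rfl fun x _ => (Finset.mul_sum _ _ _).symm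
    _ = _ := by rw [hR1, hR2]
end

section
/- Let d ≥ 1 and let A be a circulant, semi-involutory matrix of order 2^d × 2^d over a finite field F of characteristic 2, with associated non-singular diagonal matrices D₁ and D₂ satisfying A⁻¹ = D₁·A·D₂, D₁^{2^d} = k₁·I and D₂^{2^d} = k₂·I for non-zero scalars k₁, k₂ ∈ F (such associated diagonal matrices exist by the characterization of circulant semi-involutory matrices). Then trace(D₁) = 0 and trace(D₂) = 0. -/
/-! Every diagonal entry of `D` is a `2^d`-th root of the same scalar `k`; the Frobenius map is
injective in characteristic 2, so all diagonal entries coincide and `trace D` is `2^d` times one of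
them, which vanishes. -/

open Matrix

namespace Matrix

variable {ι R : Type*} [Fintype ι] [DecidableEq ι] [CommRing R]

theorem IsDiag.pow_apply_self {D : Matrix ι ι R} (hD : D.IsDiag) (n : ℕ) (i : ι) :
    (D ^ n) i i = D i i ^ n := by
  conv_lhs => rw [← hD.diagonal_diag, diagonal_pow, diagonal_apply_eq]
  rfl

theorem IsDiag.apply_self_eq_of_pow_eq_smul_one [IsReduced R] {p e : ℕ} [ExpChar R p]
    {D : Matrix ι ι R} (hD : D.IsDiag) {k : R} (hk : D ^ p ^ e = k • 1) (i j : ι) :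
    D i i = D j j := by
  have hroot : ∀ i, D i i ^ p ^ e = k := fun i => by
    rw [← hD.pow_apply_self, hk, smul_apply, one_apply_eq, smul_eq_mul, mul_one]
  apply iterateFrobenius_inj R p e
  rw [iterateFrobenius_def, iterateFrobenius_def, hroot, hroot]

omit [DecidableEq ι] in
theorem trace_eq_zero_of_apply_self_eq {D : Matrix ι ι R} (hD : ∀ i j, D i i = D j j)
    (hcard : (Fintype.card ι : R) = 0) : D.trace = 0 := by
  cases isEmpty_or_nonempty ι with
  | inl _ => simp [trace]
  | inr h =>
    obtain ⟨i₀⟩ := h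
    calc D.trace = ∑ _i : ι, D i₀ i₀ := Finset.sum_congr rfl fun i _ => hD i i₀
      _ = 0 := by rw [Finset.sum_const, Finset.card_univ, nsmul_eq_mul, hcard, zero_mul]

theorem IsDiag.trace_eq_zero_of_pow_eq_smul_one [IsReduced R] {p e : ℕ} [ExpChar R p]
    {D : Matrix ι ι R} (hD : D.IsDiag) {k : R} (hk : D ^ p ^ e = k • 1)
    (hcard : (Fintype.card ι : R) = 0) : D.trace = 0 :=
  trace_eq_zero_of_apply_self_eq (hD.apply_self_eq_of_pow_eq_smul_one hk) hcard

end Matrix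

theorem trace_eq_zero_of_circulant_semiInvolutory_two_pow_general {F : Type*} [Field F]
    [CharP F 2] {d : ℕ} (hd : 1 ≤ d)
    (D₁ D₂ : Matrix (Fin (2 ^ d)) (Fin (2 ^ d)) F)
    (hD₁diag : D₁.IsDiag) (hD₂diag : D₂.IsDiag)
    (k₁ k₂ : F)
    (hp₁ : D₁ ^ (2 ^ d) = k₁ • (1 : Matrix (Fin (2 ^ d)) (Fin (2 ^ d)) F))
    (hp₂ : D₂ ^ (2 ^ d) = k₂ • (1 : Matrix (Fin (2 ^ d)) (Fin (2 ^ d)) F)) :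
    D₁.trace = 0 ∧ D₂.trace = 0 := by
  have hcard : (Fintype.card (Fin (2 ^ d)) : F) = 0 := by
    rw [Fintype.card_fin, CharP.cast_eq_zero_iff F 2]
    exact dvd_pow_self 2 (by omega)
  exact ⟨hD₁diag.trace_eq_zero_of_pow_eq_smul_one hp₁ hcard,
    hD₂diag.trace_eq_zero_of_pow_eq_smul_one hp₂ hcard⟩

/-- Let `d ≥ 1` and let `A` be a circulant, semi-involutory matrix of order
`2^d × 2^d` over a finite field `F` of characteristic 2, with associated non-singular diagonal
matrices `D₁, D₂` satisfying `A⁻¹ = D₁ * A * D₂`, `D₁ ^ (2^d) = k₁ • I` and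
`D₂ ^ (2^d) = k₂ • I` for non-zero scalars `k₁, k₂ ∈ F`. Then `trace D₁ = 0` and
`trace D₂ = 0`. -/
theorem trace_eq_zero_of_circulant_semiInvolutory_two_pow {F : Type*} [Field F] [Fintype F]
    [CharP F 2] {d : ℕ} (hd : 1 ≤ d)
    (c : Fin (2 ^ d) → F) (A : Matrix (Fin (2 ^ d)) (Fin (2 ^ d)) F) (hA : A = circulantM c)
    (hAdet : A.det ≠ 0)
    (D₁ D₂ : Matrix (Fin (2 ^ d)) (Fin (2 ^ d)) F)
    (hD₁diag : D₁.IsDiag) (hD₂diag : D₂.IsDiag)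
    (hD₁det : D₁.det ≠ 0) (hD₂det : D₂.det ≠ 0)
    (k₁ k₂ : F) (hk₁ : k₁ ≠ 0) (hk₂ : k₂ ≠ 0)
    (hp₁ : D₁ ^ (2 ^ d) = k₁ • (1 : Matrix (Fin (2 ^ d)) (Fin (2 ^ d)) F))
    (hp₂ : D₂ ^ (2 ^ d) = k₂ • (1 : Matrix (Fin (2 ^ d)) (Fin (2 ^ d)) F))
    (hsi : A⁻¹ = D₁ * A * D₂) :
    D₁.trace = 0 ∧ D₂.trace = 0 :=
  trace_eq_zero_of_circulant_semiInvolutory_two_pow_general hd D₁ D₂ hD₁diag hD₂diag k₁ k₂ hp₁ hp₂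
end

section
/- Let A = circulant(a₀, a₁, …, a_{k−1}) be a k×k circulant matrix over a field F, and let D₁ = diagonal(d₀, …, d_{k−1}) and D₂ = diagonal(e₀, …, e_{k−1}) be non-singular diagonal matrices over F such that A·D₂·Aᵀ·D₁ = I. Then for every j with 1 ≤ j ≤ k−1 (indices modulo k), (Σ_{i=0}^{k−1} a_i·a_{i+j})·(e₀ + e₁ + ⋯ + e_{k−1}) = 0. -/
open Matrix

/-- Let `A = circulant(a₀, …, a_{k-1})` be a `k × k` circulant matrix over a
field `F`, and let `D₁ = diagonal d`, `D₂ = diagonal e` be non-singular diagonal matrices over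
`F` such that `A * D₂ * Aᵀ * D₁ = I`. Then for every `j` with `1 ≤ j ≤ k - 1` (indices
modulo `k`), `(∑_{i=0}^{k-1} a_i * a_{i+j}) * (e₀ + e₁ + ⋯ + e_{k-1}) = 0`. -/
theorem sum_shifted_products_mul_sum_eq_zero {F : Type*} [Field F] {k : ℕ}
    (a d e : Fin k → F) (hd : ∀ i, d i ≠ 0) (he : ∀ i, e i ≠ 0)
    (h : circulantM a * Matrix.diagonal e * (circulantM a)ᵀ * Matrix.diagonal d = 1) :
    ∀ j : Fin k, (j : ℕ) ≠ 0 → (∑ i : Fin k, a i * a (i + j)) * (∑ i : Fin k, e i) = 0 := by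
  intro j hj
  rcases k with _ | n
  · exact j.elim0
  have hij : ∀ i : Fin (n + 1), i ≠ i + j := by
    intro i hEq
    apply hj
    have : (0 : Fin (n+1)) = j := by
      have := hEq
      nth_rewrite 1 [← add_zero i] at this
      exact add_left_cancel this
    simp [← this]
  have key : ∀ i : Fin (n + 1),
      (∑ m, a (m - i) * e m * a (m - (i + j))) = 0 := by
    intro i
    have h2 := congrFun (congrFun h i) (i + j)
    simp only [Matrix.mul_apply, Matrix.diagonal_apply, Matrix.transpose_apply,
      circulantM, Matrix.of_apply, mul_ite, ite_mul, mul_zero, zero_mul,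
      Finset.sum_ite_eq', Finset.mem_univ, if_true,
      Matrix.one_apply_ne (hij i)] at h2
    rcases mul_eq_zero.mp h2 with h3 | h3
    · exact h3
    · exact absurd h3 (hd _)
  have main : ∑ m : Fin (n+1), ∑ i : Fin (n+1),
      a (m - i) * e m * a (m - (i + j)) = 0 := by
    rw [Finset.sum_comm]
    exact Finset.sum_eq_zero fun i _ => key i
  calc (∑ i : Fin (n+1), a i * a (i + j)) * (∑ i : Fin (n+1), e i)
      = ∑ m : Fin (n+1), ∑ i : Fin (n+1), a i * a (i + j) * e m := by
        rw [Finset.mul_sum]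
        exact Finset.sum_congr rfl fun m _ => Finset.sum_mul ..
    _ = ∑ m : Fin (n+1), ∑ i : Fin (n+1), a (m - i) * e m * a (m - (i + j)) := by
        refine Finset.sum_congr rfl fun m _ => ?_
        refine Fintype.sum_equiv (Equiv.subLeft (m - j)) _ _ fun t => ?_
        have e1 : m - (Equiv.subLeft (m - j) t) = t + j := by
          simp [Equiv.subLeft]; abel
        have e2 : m - ((Equiv.subLeft (m - j) t) + j) = t := by
          simp [Equiv.subLeft]; abel
        rw [e1, e2]
        ring
    _ = 0 := main
end

section
/- Let n ≥ 3 be odd, let A = circulant(a₀, a₁, …, a_{n−1}) be an n×n circulant matrix over a field F of characteristic 2, and let D₁ = diagonal(d₀, …, d_{n−1}) and D₂ = diagonal(e₀, …, e_{n−1}) be non-singular diagonal matrices over F such that A·D₁·A·D₂ = I. If a₁ ≠ 0, then trace(D₁) = d₀ + d₁ + ⋯ + d_{n−1} = 0. -/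
open Matrix

/-!
Since `A D₁ A = D₂⁻¹` is diagonal, its entries `(i, i + 2)` vanish. Summing them over `i` gives
`(∑ₖ dₖ) · ∑ₜ aₜ a₂₋ₜ`. In characteristic 2 the terms `t` and `2 - t` of the inner sum cancel in
pairs, and as `n` is odd the only unpaired term is `t = 1`; hence `(∑ₖ dₖ) · a₁² = 0`.
-/

open Finset

theorem Fin.add_self_injective_of_odd {n : ℕ} (hn : Odd n) :
    Function.Injective fun t : Fin n => t + t := by
  intro s t hst
  have hmod : 2 * (s : ℕ) ≡ 2 * t [MOD n] := by
    simpa [Nat.ModEq, Fin.ext_iff, Fin.val_add, two_mul] using hst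
  have hst' := Nat.ModEq.cancel_left_of_coprime (Nat.coprime_comm.1 hn.coprime_two_left) hmod
  exact Fin.ext (by rwa [Nat.ModEq, Nat.mod_eq_of_lt s.2, Nat.mod_eq_of_lt t.2] at hst')

theorem Matrix.IsDiag.of_mul_diagonal_eq_one {m R : Type*} [Fintype m] [DecidableEq m]
    [CommRing R] {M : Matrix m m R} {e : m → R} (h : M * diagonal e = 1) : M.IsDiag := by
  rw [← inv_eq_left_inv h, inv_diagonal]
  exact isDiag_diagonal _

theorem CharTwo.sum_mul_apply_add_self_sub {G R : Type*} [AddCommGroup G] [Fintype G]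
    [DecidableEq G] [CommRing R] [CharP R 2] (hG : Function.Injective fun t : G => t + t)
    (a : G → R) (x : G) :
    ∑ t, a t * a (x + x - t) = a x ^ 2 := by
  rw [← sum_erase_add _ _ (mem_univ x), add_sub_cancel_right, ← sq, add_eq_right]
  refine sum_involution (fun t _ => x + x - t) (fun t _ => ?_) (fun t ht _ hfix => ?_)
    (fun t ht => ?_) (fun t _ => sub_sub_cancel _ _)
  · rw [sub_sub_cancel, mul_comm, CharTwo.add_self_eq_zero]
  · exact (mem_erase.1 ht).1 (hG (eq_sub_iff_add_eq.1 hfix.symm))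
  · exact mem_erase.2 ⟨fun h => (mem_erase.1 ht).1 (add_left_cancel (sub_eq_iff_eq_add.1 h)).symm,
      mem_univ _⟩

section Circulant

variable {n : ℕ} {R : Type*}

theorem circulantM_mul_diagonal_mul_circulantM_apply [Semiring R] (a d b : Fin n → R)
    (i j : Fin n) :
    (circulantM a * diagonal d * circulantM b) i j = ∑ k, a (k - i) * d k * b (j - k) := by
  simp only [mul_apply (M := circulantM a * diagonal d), mul_diagonal]
  rfl

theorem sum_circulantM_mul_diagonal_mul_circulantM_apply_add [NeZero n] [CommSemiring R]
    (a d b : Fin n → R) (c : Fin n) :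
    ∑ i, (circulantM a * diagonal d * circulantM b) i (i + c) =
      (∑ k, d k) * ∑ t, a t * b (c - t) := by
  simp only [circulantM_mul_diagonal_mul_circulantM_apply]
  rw [sum_comm, sum_mul]
  refine sum_congr rfl fun k _ => ?_
  rw [mul_sum]
  refine Fintype.sum_equiv (Equiv.subLeft k) _ _ fun i => ?_
  rw [Equiv.subLeft_apply, sub_sub_eq_add_sub, add_comm c]
  ring

end Circulant

/-- Let `n ≥ 3` be odd, let `A = circulant(a₀, …, a_{n-1})` be an `n × n`
circulant matrix over a field `F` of characteristic 2, and let `D₁ = diagonal d`,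
`D₂ = diagonal e` be non-singular diagonal matrices over `F` such that
`A * D₁ * A * D₂ = I`. If `a₁ ≠ 0`, then `trace D₁ = d₀ + d₁ + ⋯ + d_{n-1} = 0`. -/
theorem trace_eq_zero_of_semiInvolutory_odd_order {F : Type*} [Field F] [CharP F 2]
    {n : ℕ} (hn : 3 ≤ n) (hodd : Odd n)
    (a d e : Fin n → F)
    (h : circulantM a * Matrix.diagonal d * circulantM a * Matrix.diagonal e = 1)
    (ha : a ⟨1, by omega⟩ ≠ 0) :
    (Matrix.diagonal d).trace = 0 := by
  have : NeZero n := ⟨by omega⟩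
  set x : Fin n := ⟨1, by omega⟩
  have hxx : x + x ≠ 0 := by
    rw [Ne, Fin.ext_iff, Fin.val_add, Fin.val_zero, Fin.val_mk, Nat.mod_eq_of_lt] <;> omega
  have hsum : (∑ k, d k) * a x ^ 2 = 0 := by
    rw [← CharTwo.sum_mul_apply_add_self_sub (Fin.add_self_injective_of_odd hodd),
      ← sum_circulantM_mul_diagonal_mul_circulantM_apply_add]
    exact sum_eq_zero fun i _ => IsDiag.of_mul_diagonal_eq_one h (left_ne_add.2 hxx)
  rw [trace_diagonal]
  exact (mul_eq_zero.1 hsum).resolve_right (pow_ne_zero 2 ha)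
end

section
/- Let k be even and let A = circulant(a₀, a₁, …, a_{k−1}) be a k×k circulant matrix over a field F. If A is MDS, then both a₀ + a₂ + ⋯ + a_{k−2} ≠ 0 and a₁ + a₃ + ⋯ + a_{k−1} ≠ 0. -/
open Matrix

lemma circ_key {F : Type*} [Field F] {k m : ℕ} (hm0 : 0 < m) [NeZero k] (a : Fin k → F)
    (hmds : IsMDS (circulantM a)) (S : Finset (Fin k))
    (r c : Fin m → Fin k) (hr : Function.Injective r) (hc : Function.Injective c)
    (hmem : ∀ j i, (c j - r i) ∈ S)
    (hsurj : ∀ j, ∀ x ∈ S, ∃ i : Fin m, c j - r i = x) :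
    (∑ x ∈ S, a x) ≠ 0 := by
  intro h0
  apply hmds m r c hr hc
  rw [← Matrix.exists_vecMul_eq_zero_iff]
  refine ⟨1, fun h => one_ne_zero (congr_fun h ⟨0, hm0⟩), ?_⟩
  funext j
  simp only [Matrix.vecMul, dotProduct, Pi.one_apply, one_mul,
    Matrix.submatrix_apply, circulantM, Matrix.of_apply, Pi.zero_apply]
  have hsum : ∑ i : Fin m, a (c j - r i) = ∑ x ∈ S, a x :=
    Finset.sum_bij (fun i (_ : i ∈ Finset.univ) => c j - r i) (fun i _ => hmem j i)
      (fun i₁ _ i₂ _ h => hr (sub_right_injective h))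
      (fun x hx => by obtain ⟨i, hi⟩ := hsurj j x hx; exact ⟨i, Finset.mem_univ i, hi⟩)
      (fun i _ => rfl)
  rw [hsum, h0]

/-- Let `k` be even and let `A = circulant(a₀, …, a_{k-1})` be a `k × k`
circulant matrix over a field `F`. If `A` is MDS, then both
`a₀ + a₂ + ⋯ + a_{k-2} ≠ 0` and `a₁ + a₃ + ⋯ + a_{k-1} ≠ 0`. -/
theorem even_odd_sums_ne_zero_of_circulant_mds {F : Type*} [Field F] {k : ℕ}
    (hk : 0 < k) (hke : Even k) (a : Fin k → F) (hmds : IsMDS (circulantM a)) :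
    (∑ i ∈ Finset.univ.filter (fun i : Fin k => Even (i : ℕ)), a i) ≠ 0 ∧
    (∑ i ∈ Finset.univ.filter (fun i : Fin k => Odd (i : ℕ)), a i) ≠ 0 := by
  obtain ⟨m, hm⟩ := hke
  have hm0 : 0 < m := by omega
  haveI : NeZero k := ⟨hk.ne'⟩
  have hsub2 : ∀ x y : Fin k, ((x - y : Fin k) : ℕ) % 2 = (x.val + (k - y.val)) % 2 := by
    intro x y
    rw [Fin.sub_def]
    have h2k : 2 ∣ k := ⟨m, by omega⟩
    have := (Nat.mod_modEq (k - y.val + x.val) k).of_dvd h2k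
    have h3 : (k - y.val + x.val) % 2 = (x.val + (k - y.val)) % 2 := by rw [Nat.add_comm]
    exact this.trans h3
  have h2i : ∀ i : Fin m, 2 * i.val < k := fun i => by have := i.isLt; omega
  have h2i1 : ∀ i : Fin m, 2 * i.val + 1 < k := fun i => by have := i.isLt; omega
  let r₀ : Fin m → Fin k := fun i => ⟨2 * i.val, h2i i⟩
  let r₁ : Fin m → Fin k := fun i => ⟨2 * i.val + 1, h2i1 i⟩
  have hr₀v : ∀ i, (r₀ i).val = 2 * i.val := fun _ => rfl
  have hr₁v : ∀ i, (r₁ i).val = 2 * i.val + 1 := fun _ => rfl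
  have hr₀inj : Function.Injective r₀ := fun i₁ i₂ h => Fin.ext (by
    have h2 := congrArg Fin.val h
    rw [hr₀v, hr₀v] at h2
    omega)
  have hr₁inj : Function.Injective r₁ := fun i₁ i₂ h => Fin.ext (by
    have h2 := congrArg Fin.val h
    rw [hr₁v, hr₁v] at h2
    omega)
  constructor
  · refine circ_key hm0 a hmds _ r₀ r₀ hr₀inj hr₀inj ?_ ?_
    · intro j i
      simp only [Finset.mem_filter, Finset.mem_univ, true_and, Nat.even_iff]
      have hp := hsub2 (r₀ j) (r₀ i)
      rw [hr₀v, hr₀v] at hp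
      have hi := i.isLt; have hj := j.isLt
      omega
    · intro j x hx
      simp only [Finset.mem_filter, Finset.mem_univ, true_and, Nat.even_iff] at hx
      have hdp := hsub2 (r₀ j) x
      rw [hr₀v] at hdp
      have hdlt : ((r₀ j - x : Fin k) : ℕ) < k := (r₀ j - x).isLt
      have hxlt := x.isLt; have hj := j.isLt
      have hdm : ((r₀ j - x : Fin k) : ℕ) / 2 < m := by omega
      refine ⟨⟨((r₀ j - x : Fin k) : ℕ) / 2, hdm⟩, ?_⟩
      have heq : r₀ ⟨((r₀ j - x : Fin k) : ℕ) / 2, hdm⟩ = r₀ j - x := Fin.ext (by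
        show 2 * (((r₀ j - x : Fin k) : ℕ) / 2) = ((r₀ j - x : Fin k) : ℕ)
        omega)
      rw [heq, sub_sub_cancel]
  · refine circ_key hm0 a hmds _ r₁ r₀ hr₁inj hr₀inj ?_ ?_
    · intro j i
      simp only [Finset.mem_filter, Finset.mem_univ, true_and, Nat.odd_iff]
      have hp := hsub2 (r₀ j) (r₁ i)
      rw [hr₀v, hr₁v] at hp
      have hi := i.isLt; have hj := j.isLt
      omega
    · intro j x hx
      simp only [Finset.mem_filter, Finset.mem_univ, true_and, Nat.odd_iff] at hx
      have hdp := hsub2 (r₀ j) x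
      rw [hr₀v] at hdp
      have hdlt : ((r₀ j - x : Fin k) : ℕ) < k := (r₀ j - x).isLt
      have hxlt := x.isLt; have hj := j.isLt
      have hdm : ((r₀ j - x : Fin k) : ℕ) / 2 < m := by omega
      refine ⟨⟨((r₀ j - x : Fin k) : ℕ) / 2, hdm⟩, ?_⟩
      have heq : r₁ ⟨((r₀ j - x : Fin k) : ℕ) / 2, hdm⟩ = r₀ j - x := Fin.ext (by
        show 2 * (((r₀ j - x : Fin k) : ℕ) / 2) + 1 = ((r₀ j - x : Fin k) : ℕ)
        omega)
      rw [heq, sub_sub_cancel]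
end
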